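/- For every integer n ≥ 1, the number of (2n+1,2n+3)-core partitions with distinct parts equals the number of order ideals I of the poset P_{2n+1,2n+3} that contain no two consecutive integers (i.e., there is no a with both a ∈ I and a+1 ∈ I). -/

import Mathlib

/-- A partition: a finite non-increasing list of positive integers. -/
structure CorePartition where
  parts : List ℕ
  sorted : parts.Pairwise (· ≥ ·)
  pos : ∀ p ∈ parts, 0 < p

namespace CorePartition

/-- The size of a partition: the sum of its parts. -/
def size (p : CorePartition) : ℕ := p.parts.sum

/-- The conjugate partition evaluated at (0-indexed) column `j`:
the number of parts strictly greater than `j`. -/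
def conj (p : CorePartition) (j : ℕ) : ℕ := (p.parts.filter (fun x => j < x)).length

/-- The hook length of the (0-indexed) cell `(i, j)` of the Young diagram:
`(λ_i − 1 − j) + (λ'_j − 1 − i) + 1`, i.e. `λ_i − i + λ'_j − j + 1` in 1-indexed terms. -/
def hook (p : CorePartition) (i j : ℕ) : ℕ :=
  (p.parts.getD i 0 - (j + 1)) + (p.conj j - (i + 1)) + 1

/-- A partition is an `s`-core if none of its hook lengths equals `s`. -/
def IsCore (p : CorePartition) (s : ℕ) : Prop :=
  ∀ i j : ℕ, i < p.parts.length → j < p.parts.getD i 0 → p.hook i j ≠ s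

/-- A partition has distinct parts if its parts are strictly decreasing. -/
def Distinct (p : CorePartition) : Prop := p.parts.Pairwise (· > ·)

end CorePartition

/-- `D n` is the set of `(2n+1, 2n+3)`-core partitions with distinct parts. -/
def D (n : ℕ) : Set CorePartition :=
  {p | p.IsCore (2 * n + 1) ∧ p.IsCore (2 * n + 3) ∧ p.Distinct}
/-- The underlying set of the poset `P_{s,t}`: nonnegative integers not of the form
`α·s + β·t` with `α, β` nonnegative integers. -/
def PosetElems (s t : ℕ) : Set ℕ := {m | ¬ ∃ a b : ℕ, m = a * s + b * t}

/-- The order relation of `P_{s,t}`: `c ≤_P d` iff `d − c = α·s + β·t` for some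
nonnegative integers `α, β`. -/
def PosetLe (s t c d : ℕ) : Prop := ∃ a b : ℕ, d = c + a * s + b * t

/-- An order ideal of the poset `P_{s,t}`: a subset `I` of the underlying set such that
`c ∈ I` whenever `c ≤_P d` for some `d ∈ I`. -/
def IsOrderIdeal (s t : ℕ) (I : Set ℕ) : Prop :=
  I ⊆ PosetElems s t ∧
    ∀ ⦃c d : ℕ⦄, c ∈ PosetElems s t → d ∈ I → PosetLe s t c d → c ∈ I

/-!
Send a partition `λ` with `k` parts to its set `β(λ) = {λ_i + k - i}` of first-column hook
lengths; every finite set of positive integers arises from exactly one `λ`. Walking along the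
boundary of the Young diagram, the hook lengths in row `i` are the differences `β_i - x` over the
`x < β_i` outside `β(λ)`, so `λ` is an `s`-core iff `β(λ)` is closed under `c ↦ c - s` for `c ≥ s`.
Since `0 ∉ β(λ)`, `λ` is then an `(s,t)`-core iff `β(λ)` misses `sℕ + tℕ` and is closed under going
down in `P_{s,t}`, i.e. is an order ideal of `P_{s,t}`, and `λ` has distinct parts iff `β(λ)` has no
two consecutive elements. For coprime `s, t` the poset `P_{s,t}` is finite, so both sides are
finite and `β` is a bijection between them.
-/

lemma IsOrderIdeal.sub_mem {s t : ℕ} {I : Set ℕ} (hI : IsOrderIdeal s t I) {c : ℕ} (hc : c ∈ I)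
    (a b : ℕ) (hle : a * s + b * t ≤ c) : c - (a * s + b * t) ∈ I :=
  hI.2 (fun ⟨a', b', h⟩ => hI.1 hc ⟨a + a', b + b', by rw [add_mul, add_mul]; omega⟩) hc
    ⟨a, b, by omega⟩

lemma finite_posetElems {s t : ℕ} (hco : s.Coprime t) : (PosetElems s t).Finite := by
  refine (Set.finite_Iio (s.pred * t.pred)).subset fun m hm => ?_
  by_contra hge
  obtain ⟨a, b, h⟩ := Nat.exists_add_mul_eq_of_gcd_dvd_of_mul_pred_le s t m
    (by simp [hco.gcd_eq_one]) (not_lt.mp hge)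
  exact hm ⟨a, b, h.symm⟩

theorem List.Pairwise.getElem_add_sub_le {L : List ℕ} (hL : L.Pairwise (· > ·)) {i j : ℕ}
    (hij : i ≤ j) (hj : j < L.length) : L[j] + (j - i) ≤ L[i] := by
  induction j, hij using Nat.le_induction with
  | base => simp
  | succ j hij ih =>
    have := List.pairwise_iff_getElem.mp hL j (j + 1) (by omega) hj (Nat.lt_succ_self j)
    have := ih (by omega)
    omega

namespace CorePartition

variable (p : CorePartition)

/-- The hook length of the cell `(i, 0)`. -/
def beta (i : ℕ) : ℕ := p.parts.getD i 0 + (p.parts.length - (i + 1))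

def betaSet : Set ℕ := {c | ∃ i < p.parts.length, p.beta i = c}

/-- Walking along the boundary of the Young diagram from the bottom-left corner, the `n`-th step
goes up iff `n = beta i` and right iff `n = gap j`. -/
def gap (j : ℕ) : ℕ := j + (p.parts.length - p.conj j)

lemma getD_pos {i : ℕ} (hi : i < p.parts.length) : 0 < p.parts.getD i 0 := by
  rw [List.getD_eq_getElem _ _ hi]
  exact p.pos _ (List.getElem_mem hi)

lemma getD_le_getD {i m : ℕ} (him : i ≤ m) (hm : m < p.parts.length) :
    p.parts.getD m 0 ≤ p.parts.getD i 0 := by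
  rw [List.getD_eq_getElem _ _ hm, List.getD_eq_getElem _ _ (him.trans_lt hm)]
  rcases him.eq_or_lt with rfl | h
  · rfl
  · exact List.pairwise_iff_getElem.mp p.sorted i m _ _ h

lemma conj_le_length (j : ℕ) : p.conj j ≤ p.parts.length := List.length_filter_le _ _

lemma conj_antitone : Antitone p.conj := fun j₁ j₂ h =>
  (List.monotone_filter_right _ fun x hx => by simp only [decide_eq_true_eq] at *; omega).length_le

lemma lt_conj {i j : ℕ} (hi : i < p.parts.length) (hj : j < p.parts.getD i 0) : i < p.conj j := by
  have hprefix : (p.parts.take (i + 1)).filter (j < ·) = p.parts.take (i + 1) := by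
    refine List.filter_eq_self.mpr fun x hx => ?_
    obtain ⟨m, hm, rfl⟩ := List.mem_iff_getElem.mp hx
    have hmi : m ≤ i := by simp only [List.length_take] at hm; omega
    have := p.getD_le_getD hmi hi
    rw [List.getElem_take, ← List.getD_eq_getElem _ 0]
    simp only [decide_eq_true_eq]
    omega
  have hlen := ((List.take_sublist (i + 1) p.parts).filter (j < ·)).length_le
  rw [hprefix, List.length_take] at hlen
  exact lt_of_lt_of_le (by omega) hlen

lemma conj_le {m j : ℕ} (hm : m < p.parts.length) (hj : p.parts.getD m 0 ≤ j) : p.conj j ≤ m := by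
  have htail : (p.parts.drop m).filter (j < ·) = [] := by
    refine List.filter_eq_nil_iff.mpr fun x hx => ?_
    obtain ⟨d, hd, rfl⟩ := List.mem_iff_getElem.mp hx
    have hmd : m + d < p.parts.length := by simp only [List.length_drop] at hd; omega
    have := p.getD_le_getD (Nat.le_add_right m d) hmd
    rw [List.getElem_drop, ← List.getD_eq_getElem _ 0]
    simp only [decide_eq_true_eq, not_lt]
    omega
  unfold conj
  rw [← List.take_append_drop m p.parts, List.filter_append, List.length_append, htail,
    List.length_nil, add_zero]
  exact (List.length_filter_le _ _).trans (List.length_take_le _ _)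

lemma beta_ne_gap {m : ℕ} (hm : m < p.parts.length) (j : ℕ) : p.beta m ≠ p.gap j := by
  have := p.conj_le_length j
  rcases le_or_gt (p.parts.getD m 0) j with h | h
  · have := p.conj_le hm h
    simp only [beta, gap]
    omega
  · have := p.lt_conj hm h
    simp only [beta, gap]
    omega

lemma hook_add_gap {i j : ℕ} (hi : i < p.parts.length) (hj : j < p.parts.getD i 0) :
    p.hook i j + p.gap j = p.beta i := by
  have := p.lt_conj hi hj
  have := p.conj_le_length j
  simp only [hook, gap, beta]
  omega

lemma beta_lt_beta {i m : ℕ} (him : i < m) (hm : m < p.parts.length) : p.beta m < p.beta i := by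
  have := p.getD_le_getD him.le hm
  simp only [beta]
  omega

lemma gap_strictMono : StrictMono p.gap := fun a b hab => by
  have := p.conj_antitone hab.le
  have := p.conj_le_length a
  simp only [gap]
  omega

/-- Below `beta i` the values `beta m` (`m > i`) and `gap j` (`j < λ_i`) are distinct and there
are exactly `beta i` of them, so they exhaust `[0, beta i)`. -/
lemma exists_beta_or_gap_eq {i x : ℕ} (hi : i < p.parts.length) (hx : x < p.beta i) :
    (∃ m < p.parts.length, p.beta m = x) ∨ ∃ j < p.parts.getD i 0, p.gap j = x := by
  classical
  set B := (Finset.Ioo i p.parts.length).image p.beta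
  set G := (Finset.range (p.parts.getD i 0)).image p.gap
  have hBcard : B.card = p.parts.length - (i + 1) := by
    rw [Finset.card_image_of_injOn, Nat.card_Ioo, Nat.sub_sub]
    intro a ha b hb hab
    simp only [Finset.coe_Ioo, Set.mem_Ioo] at ha hb
    by_contra hne
    rcases Nat.lt_or_gt_of_ne hne with h | h
    · exact (p.beta_lt_beta h hb.2).ne' hab
    · exact (p.beta_lt_beta h ha.2).ne hab
  have hGcard : G.card = p.parts.getD i 0 :=
    (Finset.card_image_of_injective _ p.gap_strictMono.injective).trans (Finset.card_range _)
  have hdisj : Disjoint B G := by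
    simp only [B, G, Finset.disjoint_left, Finset.mem_image, Finset.mem_Ioo, not_exists, not_and]
    rintro _ ⟨m, ⟨-, hm⟩, rfl⟩ j -
    exact (p.beta_ne_gap hm j).symm
  have hsub : B ∪ G ⊆ Finset.range (p.beta i) := by
    simp only [B, G, Finset.union_subset_iff, Finset.image_subset_iff, Finset.mem_Ioo,
      Finset.mem_range]
    refine ⟨fun m hm => p.beta_lt_beta hm.1 hm.2, fun j hj => ?_⟩
    have hhook : 0 < p.hook i j := Nat.succ_pos _
    have := p.hook_add_gap hi hj
    omega
  have hcover : B ∪ G = Finset.range (p.beta i) := by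
    refine Finset.eq_of_subset_of_card_le hsub ?_
    rw [Finset.card_union_of_disjoint hdisj, hBcard, hGcard, Finset.card_range]
    simp only [beta]
    omega
  have hxmem : x ∈ B ∪ G := hcover ▸ Finset.mem_range.mpr hx
  simp only [B, G, Finset.mem_union, Finset.mem_image, Finset.mem_Ioo, Finset.mem_range] at hxmem
  rcases hxmem with ⟨m, ⟨-, hm⟩, hmx⟩ | hgap
  · exact Or.inl ⟨m, hm, hmx⟩
  · exact Or.inr hgap

theorem isCore_iff {s : ℕ} (hs : 0 < s) :
    p.IsCore s ↔ ∀ c ∈ p.betaSet, s ≤ c → c - s ∈ p.betaSet := by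
  constructor
  · rintro hcore _ ⟨i, hi, rfl⟩ hsc
    by_contra hnot
    rcases p.exists_beta_or_gap_eq hi (x := p.beta i - s) (by omega) with
      ⟨m, hm, hbm⟩ | ⟨j, hj, hgj⟩
    · exact hnot ⟨m, hm, hbm⟩
    · have := p.hook_add_gap hi hj
      exact hcore i j hi hj (by omega)
  · intro hclosed i j hi hj hhook
    have := p.hook_add_gap hi hj
    obtain ⟨m, hm, hbm⟩ := hclosed _ ⟨i, hi, rfl⟩ (by omega)
    exact p.beta_ne_gap hm j (by omega)

lemma zero_notMem_betaSet : 0 ∉ p.betaSet := by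
  rintro ⟨i, hi, hbeta⟩
  have := p.getD_pos hi
  simp only [beta] at hbeta
  omega

variable {p}

lemma IsCore.sub_mul_mem_betaSet {s : ℕ} (hcore : p.IsCore s) (hs : 0 < s) {c : ℕ}
    (hc : c ∈ p.betaSet) (a : ℕ) (hac : a * s ≤ c) : c - a * s ∈ p.betaSet := by
  induction a with
  | zero => simpa using hc
  | succ a ih =>
    have hprev := ih ((Nat.mul_le_mul_right s a.le_succ).trans hac)
    have hsub := (p.isCore_iff hs).mp hcore _ hprev (by rw [add_mul] at hac; omega)
    rwa [Nat.sub_sub, ← Nat.succ_mul] at hsub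

lemma IsCore.betaSet_isOrderIdeal {s t : ℕ} (hs : 0 < s) (ht : 0 < t) (hcs : p.IsCore s)
    (hct : p.IsCore t) : IsOrderIdeal s t p.betaSet := by
  have hdown : ∀ c ∈ p.betaSet, ∀ a b, a * s + b * t ≤ c → c - (a * s + b * t) ∈ p.betaSet :=
    fun c hc a b hle => by
      rw [← Nat.sub_sub]
      exact hct.sub_mul_mem_betaSet ht (hcs.sub_mul_mem_betaSet hs hc a (by omega)) b (by omega)
  refine ⟨fun c hc ⟨a, b, hab⟩ => ?_, fun c d _ hd ⟨a, b, hab⟩ => ?_⟩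
  · exact p.zero_notMem_betaSet (by simpa [hab] using hdown c hc a b hab.ge)
  · have hc := hdown d hd a b (by omega)
    rwa [hab, add_assoc, Nat.add_sub_cancel] at hc

theorem distinct_iff : p.Distinct ↔ ∀ a, ¬(a ∈ p.betaSet ∧ a + 1 ∈ p.betaSet) := by
  constructor
  · rintro hd a ⟨⟨m, hm, hma⟩, ⟨i, hi, hia⟩⟩
    rcases lt_trichotomy i m with h | rfl | h
    · have := List.pairwise_iff_getElem.mp hd i m hi hm h
      rw [← List.getD_eq_getElem _ 0, ← List.getD_eq_getElem _ 0] at this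
      simp only [beta] at hma hia
      omega
    · omega
    · have := p.beta_lt_beta h hi
      omega
  · intro hcons
    refine List.pairwise_iff_getElem.mpr fun a b ha hb hab => ?_
    have hsucc : a + 1 < p.parts.length := by omega
    have hle := p.getD_le_getD (show a + 1 ≤ b by omega) hb
    have hle' := p.getD_le_getD (Nat.le_succ a) hsucc
    have hne : p.parts.getD (a + 1) 0 ≠ p.parts.getD a 0 := fun he =>
      hcons _ ⟨⟨a + 1, hsucc, rfl⟩, ⟨a, ha, by simp only [beta]; omega⟩⟩
    rw [List.getD_eq_getElem _ _ hb, List.getD_eq_getElem _ _ ha] at *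
    rw [List.getD_eq_getElem _ _ hsucc] at hle hle' hne
    omega

variable (p)

def betaList : List ℕ := (List.range p.parts.length).map p.beta

lemma mem_betaList {c : ℕ} : c ∈ p.betaList ↔ c ∈ p.betaSet := by
  simp [betaList, betaSet]

lemma betaList_pairwise : p.betaList.Pairwise (· > ·) :=
  List.pairwise_map.mpr <| List.pairwise_lt_range.imp_of_mem fun _ hb hab =>
    p.beta_lt_beta hab (List.mem_range.mp hb)

theorem betaSet_injective : Function.Injective betaSet := by
  intro p q h
  have hlist : p.betaList = q.betaList :=
    p.betaList_pairwise.eq_of_mem_iff q.betaList_pairwise fun c => by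
      rw [mem_betaList, mem_betaList, h]
  have hlen : p.parts.length = q.parts.length := by
    simpa [betaList] using congrArg List.length hlist
  have hparts : p.parts = q.parts := by
    refine List.ext_getElem hlen fun i hp hq => ?_
    have hbeta : p.beta i = q.beta i := by
      simpa [betaList, hp, hq] using congrArg (·[i]?) hlist
    rw [beta, beta, List.getD_eq_getElem _ _ hp, List.getD_eq_getElem _ _ hq, hlen] at hbeta
    omega
  cases p
  cases q
  cases hparts
  rfl

lemma exists_beta_eq_getElem {L : List ℕ} (hL : L.Pairwise (· > ·)) (h0 : 0 ∉ L) :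
    ∃ p : CorePartition, ∃ hlen : p.parts.length = L.length,
      ∀ i (hi : i < p.parts.length), p.beta i = L[i] := by
  have hlower : ∀ i (hi : i < L.length), L.length - i ≤ L[i] := fun i hi => by
    have hlast := hL.getElem_add_sub_le (show i ≤ L.length - 1 by omega) (by omega)
    have hpos : L[L.length - 1] ≠ 0 := fun h => h0 (h ▸ List.getElem_mem _)
    omega
  refine ⟨⟨L.mapIdx fun i c => c - (L.length - (i + 1)), ?_, ?_⟩, List.length_mapIdx, ?_⟩
  · refine List.pairwise_iff_getElem.mpr fun a b ha hb hab => ?_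
    simp only [List.length_mapIdx] at ha hb
    have := hL.getElem_add_sub_le hab.le hb
    have := hlower b hb
    simp only [List.getElem_mapIdx]
    omega
  · intro x hx
    obtain ⟨i, hi, rfl⟩ := List.mem_iff_getElem.mp hx
    simp only [List.length_mapIdx] at hi
    have := hlower i hi
    simp only [List.getElem_mapIdx]
    omega
  · intro i hi
    simp only [List.length_mapIdx] at hi
    have := hlower i hi
    dsimp only [beta]
    rw [List.getD_eq_getElem _ _ (by simpa using hi), List.getElem_mapIdx]
    simp only [List.length_mapIdx]
    omega

lemma exists_betaSet_eq {I : Set ℕ} (hI : I.Finite) (h0 : 0 ∉ I) :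
    ∃ p : CorePartition, p.betaSet = I := by
  set L := hI.toFinset.sort (· ≥ ·)
  have hmem : ∀ c, c ∈ L ↔ c ∈ I := by simp [L]
  obtain ⟨p, hlen, hbeta⟩ :=
    exists_beta_eq_getElem (Finset.sortedGT_sort _).pairwise fun h => h0 ((hmem 0).mp h)
  refine ⟨p, Set.ext fun c => ?_⟩
  rw [← hmem, List.mem_iff_getElem]
  constructor
  · rintro ⟨i, hi, rfl⟩
    exact ⟨i, hlen ▸ hi, (hbeta i hi).symm⟩
  · rintro ⟨i, hi, rfl⟩
    exact ⟨i, hlen ▸ hi, hbeta i (hlen ▸ hi)⟩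

theorem betaSet_bijOn {s t : ℕ} (hco : s.Coprime t) (hs : 0 < s) (ht : 0 < t) :
    Set.BijOn betaSet {p : CorePartition | p.IsCore s ∧ p.IsCore t ∧ p.Distinct}
      {I | IsOrderIdeal s t I ∧ ∀ a, ¬(a ∈ I ∧ a + 1 ∈ I)} := by
  refine ⟨fun p ⟨hcs, hct, hd⟩ => ⟨hcs.betaSet_isOrderIdeal hs ht hct, distinct_iff.mp hd⟩,
    betaSet_injective.injOn, fun I ⟨hI, hcons⟩ => ?_⟩
  obtain ⟨p, rfl⟩ := exists_betaSet_eq ((finite_posetElems hco).subset hI.1)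
    fun h0 => hI.1 h0 ⟨0, 0, by simp⟩
  refine ⟨p, ⟨(isCore_iff p hs).mpr fun c hc hsc => ?_, (isCore_iff p ht).mpr fun c hc htc => ?_,
    distinct_iff.mpr hcons⟩, rfl⟩
  · simpa using hI.sub_mem hc 1 0 (by simpa using hsc)
  · simpa using hI.sub_mem hc 0 1 (by simpa using htc)

end CorePartition

theorem straub_count_eq_ideals_general (n : ℕ) :
    (D n).Finite ∧
    {I : Set ℕ | IsOrderIdeal (2 * n + 1) (2 * n + 3) I ∧
      ∀ a : ℕ, ¬(a ∈ I ∧ a + 1 ∈ I)}.Finite ∧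
    (D n).ncard =
      {I : Set ℕ | IsOrderIdeal (2 * n + 1) (2 * n + 3) I ∧
        ∀ a : ℕ, ¬(a ∈ I ∧ a + 1 ∈ I)}.ncard := by
  have hco : (2 * n + 1).Coprime (2 * n + 3) := by
    rw [show 2 * n + 3 = 2 + 1 * (2 * n + 1) by ring, Nat.coprime_add_mul_right_right,
      Nat.coprime_two_right]
    exact odd_two_mul_add_one n
  have hbij : Set.BijOn CorePartition.betaSet (D n) _ :=
    CorePartition.betaSet_bijOn hco (by omega) (by omega)
  have hfin : {I : Set ℕ | IsOrderIdeal (2 * n + 1) (2 * n + 3) I ∧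
      ∀ a : ℕ, ¬(a ∈ I ∧ a + 1 ∈ I)}.Finite :=
    (finite_posetElems hco).finite_subsets.subset fun I hI => hI.1.1
  exact ⟨Set.Finite.of_finite_image (hbij.image_eq ▸ hfin) hbij.injOn, hfin, hbij.ncard_eq⟩

/-- For every integer `n ≥ 1`, the number of `(2n+1, 2n+3)`-core partitions with
distinct parts equals the number of order ideals of the poset `P_{2n+1, 2n+3}`
containing no two consecutive integers. -/
theorem straub_count_eq_ideals (n : ℕ) (hn : 1 ≤ n) :
    (D n).Finite ∧
    {I : Set ℕ | IsOrderIdeal (2 * n + 1) (2 * n + 3) I ∧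
      ∀ a : ℕ, ¬(a ∈ I ∧ a + 1 ∈ I)}.Finite ∧
    (D n).ncard =
      {I : Set ℕ | IsOrderIdeal (2 * n + 1) (2 * n + 3) I ∧
        ∀ a : ℕ, ¬(a ∈ I ∧ a + 1 ∈ I)}.ncard :=
  straub_count_eq_ideals_general n
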